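/- arXiv:2605.16028 — 2 statements merged into one kernel-verified Lean document; each statement's English description precedes it below -/
import Mathlib

section
/- In a digraph, if two directed cycles C and C' have no common arc (though they may contain opposite arcs), then the set of arcs Δ = {a ∈ C : −a ∉ C'} ∪ {a ∈ C' : −a ∉ C}, where −a denotes the arc opposite to a, can be written as a disjoint union of directed cycles. -/
/-!
Call a finite arc set balanced if every vertex has as many outgoing as incoming arcs in it.
Directed cycles are balanced, and so is every arc set closed under reversal. Now `Δ` is the
disjoint union `C ∪ C'` minus the arcs whose opposite also lies in `C ∪ C'`; the removed set is
closed under reversal, so `Δ` is balanced. In a nonempty finite balanced arc set a walk can always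
be continued, so it eventually returns to a vertex already visited and closes up into a directed
cycle; removing that cycle leaves a smaller balanced set, and induction finishes the proof.
-/

namespace SubgraphsVsOrientations

variable {V : Type*}

open Function

/-- `l` is the arc sequence of a directed cycle (in a digraph whose arcs are ordered pairs of
vertices): a nonempty closed chain of arcs visiting no vertex twice. -/
def IsCycList (l : List (V × V)) : Prop :=
  ∃ h : l ≠ [],
    l.Chain' (fun a b => a.2 = b.1) ∧
    (l.getLast h).2 = (l.head h).1 ∧
    (l.map Prod.fst).Nodup

/-- A set of arcs is a directed cycle if it is the arc set of some directed cycle. -/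
def IsCycleSet (C : Set (V × V)) : Prop :=
  ∃ l : List (V × V), IsCycList l ∧ C = {a | a ∈ l}

theorem _root_.List.Nodup.ncard_sep_eq_count {α β : Type*} [DecidableEq β] {l : List α}
    (hl : l.Nodup) (f : α → β) (b : β) :
    {a ∈ {a | a ∈ l} | f a = b}.ncard = (l.map f).count b := by
  classical
  have : {a ∈ {a | a ∈ l} | f a = b} = ↑(l.filter (f · = b)).toFinset := by ext; simp
  rw [this, Set.ncard_coe_finset, List.toFinset_card_of_nodup (hl.filter _), List.count_eq_countP,
    List.countP_map, List.countP_eq_length_filter]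
  rfl

theorem _root_.List.Nodup.length_le_ncard {α : Type*} {l : List α} (hl : l.Nodup) {s : Set α}
    (hs : s.Finite) (hls : ∀ x ∈ l, x ∈ s) : l.length ≤ s.ncard := by
  classical
  rw [← List.toFinset_card_of_nodup hl, ← Set.ncard_coe_finset]
  exact Set.ncard_le_ncard (fun x hx => hls x (List.mem_toFinset.mp hx)) hs

theorem _root_.Set.ncard_sep_union {α : Type*} {s t : Set α} (hst : Disjoint s t) (hs : s.Finite)
    (ht : t.Finite) (p : α → Prop) :
    {a ∈ s ∪ t | p a}.ncard = {a ∈ s | p a}.ncard + {a ∈ t | p a}.ncard := by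
  rw [← Set.ncard_union_eq (hst.mono (Set.sep_subset _ _) (Set.sep_subset _ _)) (hs.sep p)
    (ht.sep p)]
  exact congrArg _ Set.sep_union

theorem _root_.Set.ncard_sep_sdiff {α : Type*} {s t : Set α} (hts : t ⊆ s) (hs : s.Finite)
    (p : α → Prop) :
    {a ∈ s \ t | p a}.ncard = {a ∈ s | p a}.ncard - {a ∈ t | p a}.ncard := by
  have hsub : {a ∈ t | p a} ⊆ {a ∈ s | p a} := fun a ha => ⟨hts ha.1, ha.2⟩
  rw [← Set.ncard_sdiff hsub ((hs.subset hts).sep p)]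
  congr 1
  ext a
  simp only [Set.mem_ofPred_eq, Set.mem_sdiff]
  tauto

theorem _root_.Pairwise.disjoint_fin_cons {α : Type*} [PartialOrder α] [OrderBot α] {n : ℕ}
    {a : α} {f : Fin n → α} (hf : Pairwise (Disjoint on f)) (ha : ∀ i, Disjoint a (f i)) :
    Pairwise (Disjoint on (Fin.cons a f : Fin (n + 1) → α)) := by
  intro i j hij
  cases i using Fin.cases <;> cases j using Fin.cases
  · exact absurd rfl hij
  · exact ha _
  · exact (ha _).symm
  · exact hf (ne_of_apply_ne Fin.succ hij)

theorem map_snd_eq_tail_map_fst_append :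
    ∀ (l : List (V × V)) (h : l ≠ []), l.IsChain (fun a b => a.2 = b.1) →
      l.map Prod.snd = l.tail.map Prod.fst ++ [(l.getLast h).2]
  | [_], _, _ => by simp
  | x :: y :: t, _, hc => by
    rw [List.isChain_cons_cons] at hc
    rw [List.map_cons, map_snd_eq_tail_map_fst_append (y :: t) (List.cons_ne_nil y t) hc.2,
      List.getLast_cons_cons, hc.1]
    simp

theorem IsCycList.map_snd_eq_rotate {l : List (V × V)} (hl : IsCycList l) :
    l.map Prod.snd = (l.map Prod.fst).rotate 1 := by
  obtain ⟨hne, hc, hclose, -⟩ := hl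
  obtain ⟨x, t, rfl⟩ := List.exists_cons_of_ne_nil hne
  rw [map_snd_eq_tail_map_fst_append _ hne hc, hclose]
  simp

theorem isCycList_drop {p : List (V × V)} (hne : p ≠ []) (hc : p.IsChain (fun a b => a.2 = b.1))
    (hnd : (p.map Prod.fst).Nodup) {i : ℕ} (hi : i < p.length)
    (hclose : (p.getLast hne).2 = p[i].1) : IsCycList (p.drop i) := by
  have hne' : p.drop i ≠ [] := by simpa using hi
  refine ⟨hne', hc.drop i, ?_, ?_⟩
  · rw [List.getLast_drop, List.head_drop, hclose]
  · simpa [List.map_drop] using hnd.sublist (List.drop_sublist _ _)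

-- `Set.ncard` is `0` on infinite sets, so this is only meaningful for finite `S`.
def IsBalanced (S : Set (V × V)) : Prop :=
  ∀ v, {a ∈ S | a.1 = v}.ncard = {a ∈ S | a.2 = v}.ncard

theorem IsCycList.isBalanced {l : List (V × V)} (hl : IsCycList l) : IsBalanced {a | a ∈ l} := by
  classical
  intro v
  have hnd : l.Nodup := hl.2.2.2.of_map _
  rw [hnd.ncard_sep_eq_count, hnd.ncard_sep_eq_count, hl.map_snd_eq_rotate,
    ((l.map Prod.fst).rotate_perm 1).count_eq]

theorem IsCycleSet.isBalanced {C : Set (V × V)} (hC : IsCycleSet C) : IsBalanced C := by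
  obtain ⟨l, hl, rfl⟩ := hC
  exact hl.isBalanced

theorem IsCycleSet.finite {C : Set (V × V)} (hC : IsCycleSet C) : C.Finite := by
  obtain ⟨l, -, rfl⟩ := hC
  exact l.finite_toSet

theorem isBalanced_of_swap_mem {S : Set (V × V)} (hS : ∀ a ∈ S, a.swap ∈ S) :
    IsBalanced S := by
  intro v
  have : {a ∈ S | a.2 = v} = Prod.swap '' {a ∈ S | a.1 = v} := by
    ext a
    refine ⟨fun ha => ⟨a.swap, ⟨hS a ha.1, ha.2⟩, a.swap_swap⟩, ?_⟩
    rintro ⟨b, hb, rfl⟩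
    exact ⟨hS b hb.1, hb.2⟩
  rw [this, Set.ncard_image_of_injective _ Prod.swap_injective]

namespace IsBalanced

variable {S T : Set (V × V)}

theorem union (hS : IsBalanced S) (hT : IsBalanced T) (hST : Disjoint S T) (hSf : S.Finite)
    (hTf : T.Finite) : IsBalanced (S ∪ T) := fun v => by
  rw [Set.ncard_sep_union hST hSf hTf, Set.ncard_sep_union hST hSf hTf, hS v, hT v]

theorem sdiff (hS : IsBalanced S) (hT : IsBalanced T) (hTS : T ⊆ S) (hSf : S.Finite) :
    IsBalanced (S \ T) := fun v => by
  rw [Set.ncard_sep_sdiff hTS hSf, Set.ncard_sep_sdiff hTS hSf, hS v, hT v]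

theorem sep_swap_notMem_union (hS : IsBalanced S) (hT : IsBalanced T) (hST : Disjoint S T)
    (hSf : S.Finite) (hTf : T.Finite) :
    IsBalanced ({a ∈ S | a.swap ∉ T} ∪ {a ∈ T | a.swap ∉ S}) := by
  set R := {a ∈ S | a.swap ∈ T} ∪ {a ∈ T | a.swap ∈ S}
  have hR : IsBalanced R := isBalanced_of_swap_mem <| by
    rintro a (⟨haS, haT⟩ | ⟨haT, haS⟩)
    · exact Or.inr ⟨haT, haS⟩
    · exact Or.inl ⟨haS, haT⟩
  have hRST : R ⊆ S ∪ T := Set.union_subset_union (Set.sep_subset _ _) (Set.sep_subset _ _)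
  have hΔ : {a ∈ S | a.swap ∉ T} ∪ {a ∈ T | a.swap ∉ S} = (S ∪ T) \ R := by
    ext a
    have : a ∈ S → a ∉ T := fun h => Set.disjoint_left.mp hST h
    simp only [R, Set.mem_union, Set.mem_sdiff, Set.mem_sep_iff]
    tauto
  rw [hΔ]
  exact (hS.union hT hST hSf hTf).sdiff hR hRST (hSf.union hTf)

theorem exists_mem_fst_eq_snd (hS : IsBalanced S) (hSf : S.Finite) {a : V × V} (ha : a ∈ S) :
    ∃ b ∈ S, b.1 = a.2 := by
  have : {b ∈ S | b.2 = a.2}.Nonempty := ⟨a, ha, rfl⟩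
  rwa [← Set.ncard_pos (hSf.sep _), ← hS, Set.ncard_pos (hSf.sep _)] at this

theorem exists_cycList_of_path (hS : IsBalanced S) (hSf : S.Finite) (p : List (V × V))
    (hne : p ≠ []) (hc : p.IsChain (fun a b => a.2 = b.1)) (hnd : (p.map Prod.fst).Nodup)
    (hpS : ∀ x ∈ p, x ∈ S) : ∃ l, IsCycList l ∧ ∀ x ∈ l, x ∈ S := by
  by_cases hclose : (p.getLast hne).2 ∈ p.map Prod.fst
  · obtain ⟨i, hi, hclose⟩ := List.getElem_of_mem hclose
    rw [List.getElem_map] at hclose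
    exact ⟨p.drop i, isCycList_drop hne hc hnd (by simpa using hi) hclose.symm,
      fun x hx => hpS x (List.mem_of_mem_drop hx)⟩
  · obtain ⟨b, hbS, hb⟩ := hS.exists_mem_fst_eq_snd hSf (hpS _ (p.getLast_mem hne))
    have hpS' : ∀ x ∈ p ++ [b], x ∈ S := fun x hx =>
      (List.mem_append.mp hx).elim (hpS x) fun hx => List.mem_singleton.mp hx ▸ hbS
    have hnd' : ((p ++ [b]).map Prod.fst).Nodup := by
      rw [List.map_append, List.map_singleton, ← List.concat_eq_append, List.nodup_concat, hb]
      exact ⟨hclose, hnd⟩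
    have hc' : (p ++ [b]).IsChain (fun a b => a.2 = b.1) :=
      hc.append (List.isChain_singleton b) (by simp [List.getLast?_eq_getLast_of_ne_nil hne, hb])
    have : (p ++ [b]).length ≤ S.ncard := (hnd'.of_map _).length_le_ncard hSf hpS'
    exact hS.exists_cycList_of_path hSf (p ++ [b]) (by simp) hc' hnd' hpS'
termination_by S.ncard - p.length
decreasing_by simp only [List.length_append, List.length_singleton] at this ⊢; omega

theorem exists_cycList (hS : IsBalanced S) (hSf : S.Finite) {a : V × V} (ha : a ∈ S) :
    ∃ l, IsCycList l ∧ ∀ x ∈ l, x ∈ S :=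
  hS.exists_cycList_of_path hSf [a] (List.cons_ne_nil a []) (List.isChain_singleton a)
    (List.nodup_singleton a.1) (by simpa using ha)

theorem exists_cycle_decomposition {S : Set (V × V)} (hS : IsBalanced S) (hSf : S.Finite) :
    ∃ (n : ℕ) (f : Fin n → Set (V × V)),
      (∀ i, IsCycleSet (f i)) ∧ Pairwise (Disjoint on f) ∧ ⋃ i, f i = S := by
  rcases S.eq_empty_or_nonempty with rfl | ⟨a, ha⟩
  · exact ⟨0, Fin.elim0, Fin.rec0, fun i => i.elim0, Set.iUnion_of_empty _⟩
  obtain ⟨l, hl, hlS⟩ := hS.exists_cycList hSf ha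
  have hCS : {x | x ∈ l} ⊆ S := hlS
  have hlt : (S \ {x | x ∈ l}).ncard < S.ncard :=
    Set.ncard_lt_ncard (hCS.sdiff_ssubset_of_nonempty ⟨_, List.head_mem hl.1⟩) hSf
  obtain ⟨n, f, hf, hdisj, hunion⟩ :=
    (hS.sdiff hl.isBalanced hCS hSf).exists_cycle_decomposition hSf.sdiff
  refine ⟨n + 1, Fin.cons {x | x ∈ l} f, Fin.cases ⟨l, hl, rfl⟩ hf,
    hdisj.disjoint_fin_cons ?_, ?_⟩
  · exact fun i => Set.disjoint_left.mpr fun x hx hx' =>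
      (hunion.subset (Set.mem_iUnion_of_mem i hx')).2 hx
  · rw [Set.iUnion_cons, hunion, Set.union_sdiff_cancel hCS]
termination_by S.ncard

end IsBalanced

theorem statement17_general (C C' : Set (V × V))
    (hC : IsCycleSet C) (hC' : IsCycleSet C') (hdisj : C ∩ C' = ∅) :
    ∃ (n : ℕ) (f : Fin n → Set (V × V)),
      (∀ i, IsCycleSet (f i)) ∧
      (∀ i j, i ≠ j → Disjoint (f i) (f j)) ∧
      (⋃ i, f i) = {a ∈ C | Prod.swap a ∉ C'} ∪ {a ∈ C' | Prod.swap a ∉ C} := by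
  have hCC' : Disjoint C C' := Set.disjoint_iff_inter_eq_empty.mpr hdisj
  have hΔ := hC.isBalanced.sep_swap_notMem_union hC'.isBalanced hCC' hC.finite hC'.finite
  obtain ⟨n, f, hf, hfdisj, hunion⟩ :=
    hΔ.exists_cycle_decomposition ((hC.finite.sep _).union (hC'.finite.sep _))
  exact ⟨n, f, hf, fun _ _ => @hfdisj _ _, hunion⟩

/-- In a finite digraph with arc set `D`, if two directed cycles `C, C'`
have no common arc (though they may contain opposite arcs), then the set of arcs
`Δ = {a ∈ C : −a ∉ C'} ∪ {a ∈ C' : −a ∉ C}` is a disjoint union of directed cycles. -/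
theorem statement17 [Fintype V] (D C C' : Set (V × V))
    (hCD : C ⊆ D) (hC'D : C' ⊆ D)
    (hC : IsCycleSet C) (hC' : IsCycleSet C') (hdisj : C ∩ C' = ∅) :
    ∃ (n : ℕ) (f : Fin n → Set (V × V)),
      (∀ i, IsCycleSet (f i)) ∧
      (∀ i j, i ≠ j → Disjoint (f i) (f j)) ∧
      (⋃ i, f i) = {a ∈ C | Prod.swap a ∉ C'} ∪ {a ∈ C' | Prod.swap a ∉ C} :=
  statement17_general C C' hC hC' hdisj

end SubgraphsVsOrientations
end

section
/- In a digraph, if two directed cocycles C and C' have no common arc (though they may contain opposite arcs), then the set of arcs Δ = {a ∈ C : −a ∉ C'} ∪ {a ∈ C' : −a ∉ C}, where −a denotes the arc opposite to a, can be written as a disjoint union of directed cocycles. -/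
namespace SubgraphsVsOrientations

variable {V : Type*}

/-- A nonempty set of arcs `S` of a digraph with arc set `D` is a directed cocycle if there is
a set of vertices `V₁` such that `S` is the set of arcs of `D` with initial vertex in `V₁` and
terminal vertex outside `V₁`, and `D` has no arc with initial vertex outside `V₁` and terminal
vertex in `V₁`. -/
def IsCocycleSet (D S : Set (V × V)) : Prop :=
  ∃ V1 : Set V, S.Nonempty ∧
    S = {a | a ∈ D ∧ a.1 ∈ V1 ∧ a.2 ∉ V1} ∧
    ∀ a ∈ D, ¬ (a.1 ∉ V1 ∧ a.2 ∈ V1)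

set_option maxHeartbeats 1000000 in
/-- In a finite digraph with arc set `D`, if two directed cocycles `C, C'`
have no common arc (though they may contain opposite arcs), then the set of arcs
`Δ = {a ∈ C : −a ∉ C'} ∪ {a ∈ C' : −a ∉ C}` is a disjoint union of directed cocycles. -/
theorem statement18 [Fintype V] (D C C' : Set (V × V))
    (hC : IsCocycleSet D C) (hC' : IsCocycleSet D C') (hdisj : C ∩ C' = ∅) :
    ∃ (n : ℕ) (f : Fin n → Set (V × V)),
      (∀ i, IsCocycleSet D (f i)) ∧
      (∀ i j, i ≠ j → Disjoint (f i) (f j)) ∧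
      (⋃ i, f i) = {a ∈ C | Prod.swap a ∉ C'} ∪ {a ∈ C' | Prod.swap a ∉ C} := by
  obtain ⟨V1, hCne, rfl, hCrev⟩ := hC
  obtain ⟨V2, hC'ne, rfl, hC'rev⟩ := hC'
  set SA : Set (V × V) := {a | a ∈ D ∧ a.1 ∈ V1 ∩ V2 ∧ a.2 ∉ V1 ∩ V2} with hSA
  set SB : Set (V × V) := {a | a ∈ D ∧ a.1 ∈ V1 ∪ V2 ∧ a.2 ∉ V1 ∪ V2} with hSB
  have hd : ∀ a : V × V, ¬(a ∈ D ∧ a.1 ∈ V1 ∧ a.2 ∉ V1 ∧ a.1 ∈ V2 ∧ a.2 ∉ V2) := by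
    rintro a ⟨h1, h2, h3, h4, h5⟩
    have : a ∈ ({a | a ∈ D ∧ a.1 ∈ V1 ∧ a.2 ∉ V1} ∩ {a | a ∈ D ∧ a.1 ∈ V2 ∧ a.2 ∉ V2} :
        Set (V × V)) := ⟨⟨h1, h2, h3⟩, ⟨h1, h4, h5⟩⟩
    rw [hdisj] at this
    exact this
  -- the target right-hand side
  have hunion : SA ∪ SB =
      {a ∈ {a | a ∈ D ∧ a.1 ∈ V1 ∧ a.2 ∉ V1} |
        Prod.swap a ∉ {a | a ∈ D ∧ a.1 ∈ V2 ∧ a.2 ∉ V2}} ∪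
      {a ∈ {a | a ∈ D ∧ a.1 ∈ V2 ∧ a.2 ∉ V2} |
        Prod.swap a ∉ {a | a ∈ D ∧ a.1 ∈ V1 ∧ a.2 ∉ V1}} := by
    ext ⟨u, v⟩
    have h1 := hCrev (u, v)
    have h2 := hCrev (v, u)
    have h3 := hC'rev (u, v)
    have h4 := hC'rev (v, u)
    have h5 := hd (u, v)
    simp only [hSA, hSB, Set.mem_union, Set.mem_setOf_eq, Set.mem_inter_iff,
      Prod.swap_prod_mk, not_and, not_or, not_not] at *
    tauto
  have hrevA : ∀ a ∈ D, ¬ (a.1 ∉ (V1 ∩ V2) ∧ a.2 ∈ V1 ∩ V2) := by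
    rintro a ha ⟨hn, h1, h2⟩
    rcases (not_and_or.mp hn) with h | h
    · exact hCrev a ha ⟨h, h1⟩
    · exact hC'rev a ha ⟨h, h2⟩
  have hrevB : ∀ a ∈ D, ¬ (a.1 ∉ (V1 ∪ V2) ∧ a.2 ∈ V1 ∪ V2) := by
    rintro a ha ⟨hn, h2⟩
    rcases h2 with h | h
    · exact hCrev a ha ⟨fun hx => hn (Or.inl hx), h⟩
    · exact hC'rev a ha ⟨fun hx => hn (Or.inr hx), h⟩
  have hABdisj : Disjoint SA SB := by
    rw [Set.disjoint_left]
    rintro a ⟨ha, hA1, hA2⟩ ⟨_, _, hB2⟩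
    exact hd a ⟨ha, hA1.1, fun h => hB2 (Or.inl h), hA1.2, fun h => hB2 (Or.inr h)⟩
  by_cases hAne : SA.Nonempty <;> by_cases hBne : SB.Nonempty
  · refine ⟨2, ![SA, SB], ?_, ?_, ?_⟩
    · intro i
      fin_cases i
      · exact ⟨V1 ∩ V2, hAne, rfl, hrevA⟩
      · exact ⟨V1 ∪ V2, hBne, rfl, hrevB⟩
    · intro i j hij
      fin_cases i <;> fin_cases j
      · exact absurd rfl hij
      · exact hABdisj
      · exact hABdisj.symm
      · exact absurd rfl hij
    · rw [← hunion]
      ext a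
      simp [Fin.exists_fin_two]
  · refine ⟨1, ![SA], ?_, ?_, ?_⟩
    · intro i; fin_cases i; exact ⟨V1 ∩ V2, hAne, rfl, hrevA⟩
    · intro i j hij; fin_cases i <;> fin_cases j; exact absurd rfl hij
    · rw [← hunion, Set.not_nonempty_iff_eq_empty.mp hBne]
      simp [Set.iUnion_const]
  · refine ⟨1, ![SB], ?_, ?_, ?_⟩
    · intro i; fin_cases i; exact ⟨V1 ∪ V2, hBne, rfl, hrevB⟩
    · intro i j hij; fin_cases i <;> fin_cases j; exact absurd rfl hij
    · rw [← hunion, Set.not_nonempty_iff_eq_empty.mp hAne]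
      simp [Set.iUnion_const]
  · refine ⟨0, ![], fun i => i.elim0, fun i => i.elim0, ?_⟩
    rw [← hunion, Set.not_nonempty_iff_eq_empty.mp hAne,
      Set.not_nonempty_iff_eq_empty.mp hBne]
    simp

end SubgraphsVsOrientations
end
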